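/- arXiv:math/0108012 — 3 statements merged into one kernel-verified Lean document; each statement's English description precedes it below -/
import Mathlib

section
/- Let M be a finite-dimensional complex normed vector space, ρ : G → GL(M) a representation of G on M, and π : ℝⁿ → End(M) a linear map such that π(gξ) = ρ(g) π(ξ) ρ(g)⁻¹ for all g ∈ G, ξ ∈ ℝⁿ. For an open set U ⊆ Ω, a C¹ function ψ : U → M and ξ ∈ ℝⁿ, define (∇_ξ ψ)(x) = ∂_ξ ψ(x) − Σ_{s∈A} m_s (⟨α_s,ξ⟩/⟨α_s,x⟩)(ρ(s) ψ(x) + ψ(x)) − π(ξ) ψ(x). For g ∈ G let (ᵍψ)(x) = ρ(g) ψ(g⁻¹ x), defined on gU. Then the KZ connection is G-equivariant: for every C¹ function ψ : U → M, every g ∈ G and every ξ ∈ ℝⁿ, ∇_{gξ}(ᵍψ) = ᵍ(∇_ξ ψ) on gU. -/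
open Matrix Finset

noncomputable section

abbrev OG (n : ℕ) := ↥(Matrix.orthogonalGroup (Fin n) ℝ)

def mOf {n : ℕ} {G : Subgroup (OG n)} (g : G) : Matrix (Fin n) (Fin n) ℝ :=
  ((g : OG n) : Matrix (Fin n) (Fin n) ℝ)

/-- `M` is the orthogonal reflection with normal vector `v`. -/
def IsReflWith {n : ℕ} (M : Matrix (Fin n) (Fin n) ℝ) (v : Fin n → ℝ) : Prop :=
  v ≠ 0 ∧ ∀ x : Fin n → ℝ, M.mulVec x = x - (2 * (v ⬝ᵥ x) / (v ⬝ᵥ v)) • v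

/-- The complement of the reflection hyperplanes. -/
def OmegaSet {n : ℕ} {G : Subgroup (OG n)} (A : Finset G) (α : G → Fin n → ℝ) :
    Set (Fin n → ℝ) := {x | ∀ s ∈ A, α s ⬝ᵥ x ≠ 0}
/-- The Knizhnik–Zamolodchikov covariant derivative `∇_ξ`. -/
def nablaKZ {n : ℕ} {G : Subgroup (OG n)} (A : Finset G) (α : G → Fin n → ℝ) (m : G → ℕ)
    {M : Type} [NormedAddCommGroup M] [NormedSpace ℂ M]
    (ρ : Representation ℂ G M) (π : (Fin n → ℝ) → M →ₗ[ℂ] M)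
    (ξ : Fin n → ℝ) (ψ : (Fin n → ℝ) → M) : (Fin n → ℝ) → M := fun x =>
  fderiv ℝ ψ x ξ
    - ∑ s ∈ A, (m s : ℝ) • (((α s ⬝ᵥ ξ) / (α s ⬝ᵥ x)) • (ρ s (ψ x) + ψ x))
    - π ξ (ψ x)

section Aux

variable {n : ℕ} {G : Subgroup (OG n)}

lemma mOf_mul (g h : G) : mOf (g * h) = mOf g * mOf h := rfl

lemma mOf_one : mOf (1 : G) = (1 : Matrix (Fin n) (Fin n) ℝ) := rfl

lemma mulVec_mOf_mOf (g h : G) (x : Fin n → ℝ) :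
    (mOf g).mulVec ((mOf h).mulVec x) = (mOf (g * h)).mulVec x := by
  rw [Matrix.mulVec_mulVec, mOf_mul]

lemma mOf_inv_mulVec_mOf (g : G) (x : Fin n → ℝ) :
    (mOf g⁻¹).mulVec ((mOf g).mulVec x) = x := by
  rw [mulVec_mOf_mOf, inv_mul_cancel, mOf_one, Matrix.one_mulVec]

lemma mOf_mulVec_mOf_inv (g : G) (x : Fin n → ℝ) :
    (mOf g).mulVec ((mOf g⁻¹).mulVec x) = x := by
  simpa using mOf_inv_mulVec_mOf g⁻¹ x

lemma transpose_mOf_mul_self (g : G) : (mOf g)ᵀ * mOf g = 1 := by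
  have h := g.1.2.1
  have hstar : star ((g : OG n) : Matrix (Fin n) (Fin n) ℝ) = (mOf g)ᵀ := by
    ext i j; simp [Matrix.star_apply, mOf]
  rw [← hstar]; exact h

lemma mOf_dot (g : G) (v w : Fin n → ℝ) :
    (mOf g).mulVec v ⬝ᵥ (mOf g).mulVec w = v ⬝ᵥ w := by
  rw [Matrix.dotProduct_mulVec, Matrix.vecMul_mulVec, transpose_mOf_mul_self,
    Matrix.vecMul_one]

lemma refl_normal_unique {M : Matrix (Fin n) (Fin n) ℝ} {v w : Fin n → ℝ}
    (hv : IsReflWith M v) (hw : IsReflWith M w) : ∃ c : ℝ, c ≠ 0 ∧ w = c • v := by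
  obtain ⟨hv0, hvx⟩ := hv
  obtain ⟨hw0, hwx⟩ := hw
  have hww : w ⬝ᵥ w ≠ 0 := fun h => hw0 (dotProduct_self_eq_zero.mp h)
  have h2 : M.mulVec w = -w := by
    rw [hwx w, show 2 * (w ⬝ᵥ w) / (w ⬝ᵥ w) = 2 by field_simp]
    module
  have h1 := hvx w
  rw [h2] at h1
  have key : w = (2 * (v ⬝ᵥ w) / (v ⬝ᵥ v) / 2) • v := by
    have h3 : (2:ℝ) • w = (2 * (v ⬝ᵥ w) / (v ⬝ᵥ v)) • v := by
      linear_combination (norm := module) -h1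
    calc w = (2:ℝ)⁻¹ • ((2:ℝ) • w) := by module
    _ = (2 * (v ⬝ᵥ w) / (v ⬝ᵥ v) / 2) • v := by rw [h3]; module
  exact ⟨_, fun hc => hw0 (by rw [key, hc, zero_smul]), key⟩

lemma conj_refl {A : Finset G} {α : G → Fin n → ℝ}
    (hA : ∀ s : G, s ∈ A ↔ ∃ v : Fin n → ℝ, IsReflWith (mOf s) v)
    (hrefl : ∀ s ∈ A, IsReflWith (mOf s) (α s))
    (g : G) {s : G} (hs : s ∈ A) :
    g * s * g⁻¹ ∈ A ∧
      ∃ c : ℝ, c ≠ 0 ∧ α (g * s * g⁻¹) = c • (mOf g).mulVec (α s) := by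
  obtain ⟨hαs0, hαs⟩ := hrefl s hs
  have hne : (mOf g).mulVec (α s) ≠ 0 := by
    intro h
    apply hαs0
    rw [← mOf_inv_mulVec_mOf g (α s), h, Matrix.mulVec_zero]
  have hR : IsReflWith (mOf (g * s * g⁻¹)) ((mOf g).mulVec (α s)) := by
    refine ⟨hne, fun x => ?_⟩
    have h1 : (mOf (g * s * g⁻¹)).mulVec x
        = (mOf g).mulVec ((mOf s).mulVec ((mOf g⁻¹).mulVec x)) := by
      rw [mulVec_mOf_mOf, mulVec_mOf_mOf]
    have hd1 : α s ⬝ᵥ (mOf g⁻¹).mulVec x = (mOf g).mulVec (α s) ⬝ᵥ x := by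
      conv_rhs => rw [← mOf_mulVec_mOf_inv g x]
      rw [mOf_dot]
    have hd2 : (mOf g).mulVec (α s) ⬝ᵥ (mOf g).mulVec (α s) = α s ⬝ᵥ α s :=
      mOf_dot g _ _
    rw [h1, hαs, Matrix.mulVec_sub, hd2, ← hd1]
    rw [mOf_mulVec_mOf_inv]
    congr 1
    rw [Matrix.mulVec_smul]
  have hmem : g * s * g⁻¹ ∈ A := (hA _).mpr ⟨_, hR⟩
  exact ⟨hmem, refl_normal_unique hR (hrefl _ hmem)⟩

end Aux

/-- The Knizhnik–Zamolodchikov connection is `G`-equivariant: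
`∇_{gξ} (ᵍψ) = ᵍ(∇_ξ ψ)` on `gU`, where `(ᵍψ)(x) = ρ(g) ψ(g⁻¹ x)`. -/
theorem kz_connection_equivariant
    (n : ℕ) (hn : 1 ≤ n) (G : Subgroup (OG n)) [Fintype G]
    (A : Finset G) (α : G → Fin n → ℝ)
    (hA : ∀ s : G, s ∈ A ↔ ∃ v : Fin n → ℝ, IsReflWith (mOf s) v)
    (hrefl : ∀ s ∈ A, IsReflWith (mOf s) (α s))
    (hgen : Subgroup.closure (A : Set G) = ⊤)
    (m : G → ℕ) (hm : ∀ (g : G), ∀ s ∈ A, m (g * s * g⁻¹) = m s)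
    {M : Type} [NormedAddCommGroup M] [NormedSpace ℂ M] [FiniteDimensional ℂ M]
    (ρ : Representation ℂ G M) (π : (Fin n → ℝ) → M →ₗ[ℂ] M)
    (hπ_add : ∀ ξ η : Fin n → ℝ, π (ξ + η) = π ξ + π η)
    (hπ_smul : ∀ (c : ℝ) (ξ : Fin n → ℝ) (v : M), π (c • ξ) v = c • π ξ v)
    (hπ_equiv : ∀ (g : G) (ξ : Fin n → ℝ),
      π ((mOf g).mulVec ξ) = (ρ g) ∘ₗ (π ξ) ∘ₗ (ρ g⁻¹))
    (U : Set (Fin n → ℝ)) (hUopen : IsOpen U) (hUΩ : U ⊆ OmegaSet A α)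
    (ψ : (Fin n → ℝ) → M) (hψ : ContDiffOn ℝ 1 ψ U) (g : G) (ξ : Fin n → ℝ) :
    ∀ x ∈ (fun y => (mOf g).mulVec y) '' U,
      nablaKZ A α m ρ π ((mOf g).mulVec ξ)
          (fun y => ρ g (ψ ((mOf g⁻¹).mulVec y))) x
        = ρ g (nablaKZ A α m ρ π ξ ψ ((mOf g⁻¹).mulVec x)) := by
  rintro x ⟨u, hu, rfl⟩
  have hgu : (mOf g⁻¹).mulVec ((mOf g).mulVec u) = u := mOf_inv_mulVec_mOf g u
  have hρinv : ∀ v : M, ρ g⁻¹ (ρ g v) = v := by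
    intro v
    rw [← Module.End.mul_apply, ← _root_.map_mul, inv_mul_cancel, _root_.map_one,
      Module.End.one_apply]
  have hρmul : ∀ (a b : G) (v : M), ρ (a * b) v = ρ a (ρ b v) := by
    intro a b v
    rw [_root_.map_mul, Module.End.mul_apply]
  -- derivative part
  have hdiff : DifferentiableAt ℝ ψ u :=
    (hψ.contDiffAt (hUopen.mem_nhds hu)).differentiableAt one_ne_zero
  set L : (Fin n → ℝ) →L[ℝ] (Fin n → ℝ) :=
    LinearMap.toContinuousLinearMap (Matrix.mulVecLin (mOf g⁻¹)) with hL
  set T : M →L[ℝ] M :=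
    (LinearMap.toContinuousLinearMap (ρ g)).restrictScalars ℝ with hT
  have hLy : ∀ y, L y = (mOf g⁻¹).mulVec y := fun y => rfl
  have hTy : ∀ v, T v = ρ g v := fun v => rfl
  have hψL : HasFDerivAt (fun y => ψ ((mOf g⁻¹).mulVec y))
      ((fderiv ℝ ψ u).comp L) ((mOf g).mulVec u) := by
    have h1 : HasFDerivAt ψ (fderiv ℝ ψ u) (L ((mOf g).mulVec u)) := by
      rw [hLy, hgu]; exact hdiff.hasFDerivAt
    exact h1.comp _ L.hasFDerivAt
  have hfull : HasFDerivAt (fun y => ρ g (ψ ((mOf g⁻¹).mulVec y)))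
      (T.comp ((fderiv ℝ ψ u).comp L)) ((mOf g).mulVec u) :=
    T.hasFDerivAt.comp _ hψL
  have hfd : fderiv ℝ (fun y => ρ g (ψ ((mOf g⁻¹).mulVec y))) ((mOf g).mulVec u)
      ((mOf g).mulVec ξ) = ρ g (fderiv ℝ ψ u ξ) := by
    rw [hfull.fderiv]
    have : L ((mOf g).mulVec ξ) = ξ := by rw [hLy]; exact mOf_inv_mulVec_mOf g ξ
    simp only [ContinuousLinearMap.comp_apply, this, hTy]
  -- sum part
  have hsum : ∑ s ∈ A, (m s : ℝ) •
        (((α s ⬝ᵥ (mOf g).mulVec ξ) / (α s ⬝ᵥ (mOf g).mulVec u)) •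
          (ρ s (ρ g (ψ u)) + ρ g (ψ u)))
      = ρ g (∑ s ∈ A, (m s : ℝ) •
          (((α s ⬝ᵥ ξ) / (α s ⬝ᵥ u)) • (ρ s (ψ u) + ψ u))) := by
    rw [map_sum]
    refine (Finset.sum_nbij' (fun s => g * s * g⁻¹) (fun t => g⁻¹ * t * g)
      (fun s hs => (conj_refl hA hrefl g hs).1)
      (fun t ht => by simpa using (conj_refl hA hrefl g⁻¹ ht).1)
      (fun s _ => by group) (fun t _ => by group) ?_).symm
    intro s hs
    obtain ⟨c, hc0, hc⟩ := (conj_refl hA hrefl g hs).2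
    have hratio : (α (g * s * g⁻¹) ⬝ᵥ (mOf g).mulVec ξ)
          / (α (g * s * g⁻¹) ⬝ᵥ (mOf g).mulVec u)
        = (α s ⬝ᵥ ξ) / (α s ⬝ᵥ u) := by
      rw [hc, smul_dotProduct, smul_dotProduct, mOf_dot, mOf_dot,
        smul_eq_mul, smul_eq_mul, mul_div_mul_left _ _ hc0]
    have hρ1 : ρ (g * s * g⁻¹) (ρ g (ψ u)) = ρ g (ρ s (ψ u)) := by
      rw [← hρmul, ← hρmul]
      congr 1
      group
    rw [hm g s hs, hratio, hρ1, LinearMap.map_smul_of_tower, LinearMap.map_smul_of_tower,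
      map_add]
  -- π part
  have hπt : (π ((mOf g).mulVec ξ)) (ρ g (ψ u)) = ρ g (π ξ (ψ u)) := by
    rw [hπ_equiv g ξ]
    simp only [LinearMap.comp_apply]
    rw [hρinv]
  simp only [nablaKZ, hgu]
  rw [map_sub, map_sub, hfd, hsum, hπt]
end
end

section
/- Let (V, ρ) be an irreducible finite-dimensional complex representation of G, and let ψ : Ω → V be a function each of whose components (in some basis of V) is the restriction to Ω of a polynomial, satisfying the KZ equations without spectral term: ∂_ξ ψ(x) = Σ_{s∈A} m_s (⟨α_s,ξ⟩/⟨α_s,x⟩)(ρ(s) ψ(x) + ψ(x)) for all ξ ∈ ℝⁿ and x ∈ Ω. Then ψ is homogeneous of degree δ = (2 / dim_ℂ V) · Σ_{s∈A} m_s · dim_ℂ {v ∈ V : ρ(s) v = v}: that is, ψ(t x) = t^δ ψ(x) for all t > 0 and x ∈ Ω. -/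
open Matrix Finset

noncomputable section

lemma diffPoly {n : ℕ} (p : MvPolynomial (Fin n) ℂ) :
    Differentiable ℝ (fun x : Fin n → ℝ => MvPolynomial.eval (fun j => ((x j : ℝ) : ℂ)) p) := by
  induction p using MvPolynomial.induction_on with
  | C a => simp
  | add p q hp hq => simpa using hp.fun_add hq
  | mul_X p i hp =>
    simp only [MvPolynomial.eval_mul, MvPolynomial.eval_X]
    have : Differentiable ℝ (fun x : Fin n → ℝ => ((x i : ℝ) : ℂ)) :=
      (Complex.ofRealCLM.comp (ContinuousLinearMap.proj i : (Fin n → ℝ) →L[ℝ] ℝ)).differentiable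
    exact hp.mul this

lemma omega_open {n : ℕ} {G : Subgroup (OG n)} (A : Finset G) (α : G → Fin n → ℝ) :
    IsOpen (OmegaSet A α) := by
  have : OmegaSet A α = ⋂ s ∈ A, {x : Fin n → ℝ | α s ⬝ᵥ x ≠ 0} := by
    ext x; simp [OmegaSet]
  rw [this]
  refine isOpen_biInter_finset fun s _ => ?_
  have hc : Continuous fun x : Fin n → ℝ => α s ⬝ᵥ x := by
    unfold dotProduct
    exact continuous_finset_sum _ fun i _ => (continuous_const.mul (continuous_apply i))
  exact isOpen_compl_singleton.preimage hc

lemma mOf_inj {n : ℕ} {G : Subgroup (OG n)} : Function.Injective (mOf (G := G)) :=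
  fun _ _ h => Subtype.ext (Subtype.ext h)

lemma star_orth {n : ℕ} {G : Subgroup (OG n)} (g : G) :
    star (mOf g) * mOf g = 1 ∧ mOf g * star (mOf g) = 1 :=
  ⟨(g : OG n).2.1, (g : OG n).2.2⟩

lemma star_eq_transpose {n : ℕ} (N : Matrix (Fin n) (Fin n) ℝ) : star N = Nᵀ := by
  ext i j; simp [Matrix.star_apply]

lemma refl_sq {n : ℕ} {M : Matrix (Fin n) (Fin n) ℝ} {v : Fin n → ℝ}
    (h : IsReflWith M v) : M * M = 1 := by
  obtain ⟨hv, hM⟩ := h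
  have hvv : v ⬝ᵥ v ≠ 0 := fun hc => hv (dotProduct_self_eq_zero.mp hc)
  have key : ∀ x, (M * M) *ᵥ x = (1 : Matrix (Fin n) (Fin n) ℝ) *ᵥ x := by
    intro x
    rw [← mulVec_mulVec, hM, hM, one_mulVec]
    rw [dotProduct_sub, dotProduct_smul]
    have h1 : 2 * (v ⬝ᵥ x - (2 * (v ⬝ᵥ x) / (v ⬝ᵥ v)) • (v ⬝ᵥ v)) / (v ⬝ᵥ v)
        = -(2 * (v ⬝ᵥ x) / (v ⬝ᵥ v)) := by
      rw [smul_eq_mul, div_mul_cancel₀ _ hvv]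
      ring
    rw [h1, neg_smul, sub_neg_eq_add, sub_add_cancel]
  exact Matrix.toLin'.injective (LinearMap.ext fun x => by
    simp only [Matrix.toLin'_apply]
    exact key x)

lemma conj_refl_s16 {n : ℕ} {G : Subgroup (OG n)} (g s : G) {v : Fin n → ℝ}
    (h : IsReflWith (mOf s) v) : IsReflWith (mOf (g * s * g⁻¹)) (mOf g *ᵥ v) := by
  obtain ⟨hv, hM⟩ := h
  set N := mOf g with hN
  have h1 : star N * N = 1 := (star_orth g).1
  have h2 : N * star N = 1 := (star_orth g).2
  have hdot : ∀ x, v ⬝ᵥ (star N *ᵥ x) = (N *ᵥ v) ⬝ᵥ x := by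
    intro x
    rw [dotProduct_mulVec, star_eq_transpose, vecMul_transpose]
  have hnorm : (N *ᵥ v) ⬝ᵥ (N *ᵥ v) = v ⬝ᵥ v := by
    have h1' : Nᵀ * N = 1 := by rw [← star_eq_transpose]; exact h1
    rw [dotProduct_mulVec, vecMul_mulVec, h1', vecMul_one]
  constructor
  · intro hc
    apply hv
    have : star N *ᵥ (N *ᵥ v) = v := by rw [mulVec_mulVec, h1, one_mulVec]
    rw [hc, mulVec_zero] at this
    exact this.symm
  · intro x
    have hrw : mOf (g * s * g⁻¹) = N * mOf s * star N := rfl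
    rw [hrw, ← mulVec_mulVec, ← mulVec_mulVec, hM, mulVec_sub, Matrix.mulVec_smul,
      mulVec_mulVec, h2, one_mulVec, hdot, hnorm]

lemma trace_invol {V : Type} [NormedAddCommGroup V] [NormedSpace ℂ V] [FiniteDimensional ℂ V]
    (f : Module.End ℂ V) (h : f * f = 1) :
    LinearMap.trace ℂ V f
      = 2 * (Module.finrank ℂ (Module.End.eigenspace f 1) : ℂ) - (Module.finrank ℂ V : ℂ) := by
  have hff : ∀ x, f (f x) = x := fun x => by
    have := congrArg (fun g : Module.End ℂ V => g x) h
    simpa [Module.End.mul_apply] using this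
  set p : Module.End ℂ V := (2⁻¹ : ℂ) • (1 + f) with hp
  have hproj : LinearMap.IsProj (Module.End.eigenspace f 1) p := by
    constructor
    · intro x
      rw [Module.End.mem_eigenspace_iff, one_smul]
      simp only [hp, LinearMap.smul_apply, LinearMap.add_apply, Module.End.one_apply,
        LinearMap.map_smul, map_add, hff]
      rw [add_comm (f x) x]
    · intro x hx
      rw [Module.End.mem_eigenspace_iff, one_smul] at hx
      simp only [hp, LinearMap.smul_apply, LinearMap.add_apply, Module.End.one_apply, hx]
      rw [← two_smul ℂ x, smul_smul]
      norm_num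
  have htr : LinearMap.trace ℂ V p = (Module.finrank ℂ (Module.End.eigenspace f 1) : ℂ) :=
    hproj.trace
  have hexp : LinearMap.trace ℂ V p
      = 2⁻¹ * ((Module.finrank ℂ V : ℂ) + LinearMap.trace ℂ V f) := by
    rw [hp, LinearMap.map_smul, map_add, LinearMap.trace_one]
    simp [smul_eq_mul]
  rw [hexp] at htr
  have h2 : (2 : ℂ) ≠ 0 := two_ne_zero
  field_simp at htr
  linear_combination htr

lemma key_operator
    (n : ℕ) (G : Subgroup (OG n)) [Fintype G]
    (A : Finset G) (α : G → Fin n → ℝ)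
    (hA : ∀ s : G, s ∈ A ↔ ∃ v : Fin n → ℝ, IsReflWith (mOf s) v)
    (hrefl : ∀ s ∈ A, IsReflWith (mOf s) (α s))
    (m : G → ℕ) (hm : ∀ (g : G), ∀ s ∈ A, m (g * s * g⁻¹) = m s)
    {V : Type} [NormedAddCommGroup V] [NormedSpace ℂ V] [FiniteDimensional ℂ V]
    [Nontrivial V] (ρ : Representation ℂ G V)
    (hirr : ∀ W : Submodule ℂ V, (∀ (g : G), ∀ v ∈ W, ρ g v ∈ W) → W = ⊥ ∨ W = ⊤) :
    ∀ w : V, ∑ s ∈ A, (m s : ℝ) • (ρ s w + w)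
      = ((2 / (Module.finrank ℂ V : ℝ)) * ∑ s ∈ A, (m s : ℝ)
          * (Module.finrank ℂ (Module.End.eigenspace (ρ s : Module.End ℂ V) 1) : ℝ)) • w := by
  classical
  have hconjA : ∀ (g : G), ∀ s ∈ A, g * s * g⁻¹ ∈ A := fun g s hs =>
    (hA _).mpr ⟨mOf g *ᵥ α s, conj_refl_s16 g s (hrefl s hs)⟩
  have hs2 : ∀ s ∈ A, s * s = 1 := by
    intro s hs
    apply mOf_inj
    have : mOf (s * s) = mOf s * mOf s := rfl
    rw [this, refl_sq (hrefl s hs)]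
    rfl
  set T : Module.End ℂ V := ∑ s ∈ A, (m s : ℂ) • ((ρ s : Module.End ℂ V) + 1) with hT
  have hcomm : ∀ g : G, (ρ g : Module.End ℂ V) * T = T * ρ g := by
    intro g
    rw [hT, Finset.mul_sum, Finset.sum_mul]
    refine Finset.sum_nbij' (fun s => g * s * g⁻¹) (fun s => g⁻¹ * s * g) ?_ ?_ ?_ ?_ ?_
    · intro s hs; exact hconjA g s hs
    · intro s hs
      have := hconjA g⁻¹ s hs
      rwa [inv_inv] at this
    · intro s _; group
    · intro s _; group
    · intro s hs
      rw [hm g s hs]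
      rw [mul_smul_comm, smul_mul_assoc]
      congr 1
      rw [mul_add, add_mul, mul_one, one_mul]
      congr 1
      have : (g * s * g⁻¹) * g = g * s := by group
      rw [← _root_.map_mul, ← _root_.map_mul, this]
  obtain ⟨c, hc⟩ := Module.End.exists_eigenvalue T
  set W := Module.End.eigenspace T c with hW
  have hWinv : ∀ (g : G), ∀ v ∈ W, ρ g v ∈ W := by
    intro g v hv
    rw [hW, Module.End.mem_eigenspace_iff] at hv ⊢
    have : T (ρ g v) = ρ g (T v) := by
      have := congrArg (fun f : Module.End ℂ V => f v) (hcomm g)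
      simpa [Module.End.mul_apply] using this.symm
    rw [this, hv, _root_.map_smul]
  have hWtop : W = ⊤ := by
    rcases hirr W hWinv with h | h
    · exact absurd h hc
    · exact h
  have hTsc : ∀ w : V, T w = c • w := by
    intro w
    have : w ∈ W := hWtop ▸ Submodule.mem_top
    rwa [hW, Module.End.mem_eigenspace_iff] at this
  have hd : (Module.finrank ℂ V : ℂ) ≠ 0 := by
    have : 0 < Module.finrank ℂ V := Module.finrank_pos
    exact_mod_cast this.ne'
  have htr1 : LinearMap.trace ℂ V T = c * (Module.finrank ℂ V : ℂ) := by
    have : T = c • (1 : Module.End ℂ V) := LinearMap.ext fun w => by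
      simp [hTsc w]
    rw [this, LinearMap.map_smul, LinearMap.trace_one, smul_eq_mul]
  have htr2 : LinearMap.trace ℂ V T
      = ∑ s ∈ A, (m s : ℂ) * (2 * (Module.finrank ℂ
          (Module.End.eigenspace (ρ s : Module.End ℂ V) 1) : ℂ)) := by
    rw [hT, map_sum]
    refine Finset.sum_congr rfl fun s hs => ?_
    have hinv : (ρ s : Module.End ℂ V) * (ρ s : Module.End ℂ V) = 1 := by
      rw [← _root_.map_mul, hs2 s hs, _root_.map_one]
    rw [LinearMap.map_smul, map_add, LinearMap.trace_one, trace_invol _ hinv, smul_eq_mul]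
    ring
  have hc_eq : c = (((2 / (Module.finrank ℂ V : ℝ)) * ∑ s ∈ A, (m s : ℝ)
      * (Module.finrank ℂ (Module.End.eigenspace (ρ s : Module.End ℂ V) 1) : ℝ) : ℝ) : ℂ) := by
    have h12 := htr1.symm.trans htr2
    push_cast
    field_simp at h12 ⊢
    rw [h12, Finset.mul_sum]
    refine Finset.sum_congr rfl fun s hs => ?_
    ring
  intro w
  have hTw : T w = ∑ s ∈ A, (m s : ℂ) • (ρ s w + w) := by
    rw [hT, LinearMap.sum_apply]
    refine Finset.sum_congr rfl fun s _ => ?_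
    simp [LinearMap.smul_apply, LinearMap.add_apply]
  have hcast : ∑ s ∈ A, (m s : ℝ) • (ρ s w + w) = ∑ s ∈ A, (m s : ℂ) • (ρ s w + w) := by
    refine Finset.sum_congr rfl fun s _ => ?_
    rw [Nat.cast_smul_eq_nsmul ℝ, Nat.cast_smul_eq_nsmul ℂ]
  rw [hcast, ← hTw, hTsc w, hc_eq, Complex.coe_smul]

/-- A polynomial solution of the KZ equations (no spectral term) with values in an
irreducible representation `V` is homogeneous of degree
`δ = (2/dim V) Σ_{s∈A} m_s dim V^{s,+}`. -/
theorem kz_polynomial_solution_homogeneous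
    (n : ℕ) (hn : 1 ≤ n) (G : Subgroup (OG n)) [Fintype G]
    (A : Finset G) (α : G → Fin n → ℝ)
    (hA : ∀ s : G, s ∈ A ↔ ∃ v : Fin n → ℝ, IsReflWith (mOf s) v)
    (hrefl : ∀ s ∈ A, IsReflWith (mOf s) (α s))
    (hgen : Subgroup.closure (A : Set G) = ⊤)
    (m : G → ℕ) (hm : ∀ (g : G), ∀ s ∈ A, m (g * s * g⁻¹) = m s)
    {V : Type} [NormedAddCommGroup V] [NormedSpace ℂ V] [FiniteDimensional ℂ V]
    [Nontrivial V] (ρ : Representation ℂ G V)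
    (hirr : ∀ W : Submodule ℂ V, (∀ (g : G), ∀ v ∈ W, ρ g v ∈ W) → W = ⊥ ∨ W = ⊤)
    (ψ : (Fin n → ℝ) → V)
    (hpoly : ∃ (N : ℕ) (v : Fin N → V) (P : Fin N → MvPolynomial (Fin n) ℂ),
      ∀ x ∈ OmegaSet A α, ψ x
        = ∑ i, MvPolynomial.eval (fun j => ((x j : ℝ) : ℂ)) (P i) • v i)
    (hKZ : ∀ (ξ : Fin n → ℝ), ∀ x ∈ OmegaSet A α,
      fderiv ℝ ψ x ξ = ∑ s ∈ A, (m s : ℝ) • (((α s ⬝ᵥ ξ) / (α s ⬝ᵥ x)) • (ρ s (ψ x) + ψ x))) :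
    ∀ t : ℝ, 0 < t → ∀ x ∈ OmegaSet A α,
      ψ (t • x) = (t ^ ((2 / (Module.finrank ℂ V : ℝ)) * ∑ s ∈ A, (m s : ℝ)
          * (Module.finrank ℂ (Module.End.eigenspace (ρ s : Module.End ℂ V) 1) : ℝ))) • ψ x := by
  intro t ht x hx
  set δ : ℝ := (2 / (Module.finrank ℂ V : ℝ)) * ∑ s ∈ A, (m s : ℝ)
      * (Module.finrank ℂ (Module.End.eigenspace (ρ s : Module.End ℂ V) 1) : ℝ) with hδ
  obtain ⟨N, v, P, hP⟩ := hpoly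
  set Q : (Fin n → ℝ) → V :=
    fun y => ∑ i, MvPolynomial.eval (fun j => ((y j : ℝ) : ℂ)) (P i) • v i with hQdef
  have hQdiff : Differentiable ℝ Q := by
    apply Differentiable.fun_sum
    intro i _
    exact (diffPoly (P i)).smul_const (v i)
  have hopen := omega_open A α
  have hmem : ∀ u : ℝ, 0 < u → u • x ∈ OmegaSet A α := by
    intro u hu s hs
    rw [dotProduct_smul, smul_eq_mul]
    exact mul_ne_zero hu.ne' (hx s hs)
  have hop := key_operator n G A α hA hrefl m hm ρ hirr
  have hderiv : ∀ u : ℝ, 0 < u →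
      HasDerivAt (fun r : ℝ => ψ (r • x)) ((δ / u) • ψ (u • x)) u := by
    intro u hu
    have hmemu := hmem u hu
    have hψd : DifferentiableAt ℝ ψ (u • x) := by
      have hev : ψ =ᶠ[nhds (u • x)] Q :=
        Filter.eventuallyEq_of_mem (hopen.mem_nhds hmemu) (fun y hy => hP y hy)
      exact (hev.differentiableAt_iff).mpr (hQdiff _)
    have hline : HasDerivAt (fun r : ℝ => r • x) x u := by
      simpa using (hasDerivAt_id u).smul_const x
    have hcomp : HasDerivAt (fun r : ℝ => ψ (r • x)) _ u := hψd.hasFDerivAt.comp_hasDerivAt u hline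
    convert hcomp using 1
    rw [hKZ x (u • x) hmemu]
    have hratio : ∀ s ∈ A, (α s ⬝ᵥ x) / (α s ⬝ᵥ (u • x)) = u⁻¹ := by
      intro s hs
      rw [dotProduct_smul, smul_eq_mul]
      have hne := hx s hs
      field_simp
    calc (δ / u) • ψ (u • x) = u⁻¹ • δ • ψ (u • x) := by
          rw [smul_smul, div_eq_mul_inv, mul_comm]
      _ = u⁻¹ • ∑ s ∈ A, (m s : ℝ) • (ρ s (ψ (u • x)) + ψ (u • x)) := by rw [hop]
      _ = ∑ s ∈ A, (m s : ℝ) • ((α s ⬝ᵥ x) / (α s ⬝ᵥ (u • x))) • (ρ s (ψ (u • x)) + ψ (u • x)) := by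
          rw [Finset.smul_sum]
          exact Finset.sum_congr rfl fun s hs => by rw [hratio s hs, smul_comm]
  set g : ℝ → V := fun u => (u ^ (-δ)) • ψ (u • x) with hgdef
  have hg : ∀ u ∈ Set.Ioi (0 : ℝ), HasDerivAt g 0 u := by
    intro u hu
    replace hu : 0 < u := hu
    have h1 : HasDerivAt (fun r : ℝ => r ^ (-δ)) (-δ * u ^ (-δ - 1)) u :=
      Real.hasDerivAt_rpow_const (Or.inl (ne_of_gt hu))
    have h2 := hderiv u hu
    have h3 : HasDerivAt g _ u := h1.smul h2
    convert h3 using 1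
    have hexp : u ^ (-δ - 1) = u ^ (-δ) * u⁻¹ := by
      rw [← Real.rpow_neg_one u, ← Real.rpow_add hu]
      ring_nf
    have hcoef : u ^ (-δ) * (δ / u) + (-δ * u ^ (-δ - 1)) = 0 := by
      rw [hexp, div_eq_mul_inv]
      ring
    rw [smul_smul, ← add_smul, hcoef, zero_smul]
  have hgFD : ∀ u ∈ Set.Ioi (0 : ℝ),
      HasFDerivWithinAt g (0 : ℝ →L[ℝ] V) (Set.Ioi (0 : ℝ)) u := by
    intro u hu
    have h0 : ContinuousLinearMap.smulRight (1 : ℝ →L[ℝ] ℝ) (0 : V) = 0 := by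
      ext r; simp
    exact ((hg u hu).hasFDerivAt.congr_fderiv (by ext r; simp)).hasFDerivWithinAt
  have hbound := (convex_Ioi (0 : ℝ)).norm_image_sub_le_of_norm_hasFDerivWithin_le
    (C := 0) hgFD (fun u _ => by simp) (Set.mem_Ioi.mpr one_pos) (Set.mem_Ioi.mpr ht)
  have hgt : g t = g 1 := by
    have : ‖g t - g 1‖ ≤ 0 := by simpa using hbound
    have := le_antisymm this (norm_nonneg _)
    rwa [norm_eq_zero, sub_eq_zero] at this
  have hg1 : g 1 = ψ x := by
    rw [hgdef]
    simp [Real.one_rpow]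
  have hkey : (t ^ (-δ)) • ψ (t • x) = ψ x := by
    rw [← hg1, ← hgt]
  have : ψ (t • x) = (t ^ δ) • (t ^ (-δ)) • ψ (t • x) := by
    rw [smul_smul, ← Real.rpow_add ht]
    simp
  rw [this, hkey]
end
end

section
/- On the open set Δ = {x ∈ ℝⁿ : xᵢ ≠ xⱼ for all i ≠ j}, the functions F₁,…,Fₙ satisfy: (a) Σ_{j=1}^n F_j(x) = 0 for every x ∈ Δ; (b) each F_i is differentiable on Δ and for all indices i ≠ j and all x ∈ Δ, ∂F_i/∂x_j (x) = −m · (F_i(x) − F_j(x)) / (x_i − x_j). -/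
open Matrix Finset intervalIntegral

noncomputable section

/-- `F_j(x) = ∫_{x_p}^{x_q} (t-x_j)^{m-1} Π_{k≠j} (t-x_k)^m dt`. -/
def Fint (n m : ℕ) (p q : Fin n) (j : Fin n) (x : Fin n → ℝ) : ℝ :=
  ∫ t in x p..x q, (t - x j) ^ (m - 1) * ∏ k ∈ Finset.univ.erase j, (t - x k) ^ m

lemma cont_integrand {n m : ℕ} (x : Fin n → ℝ) (j : Fin n) :
    Continuous (fun t : ℝ => (t - x j) ^ (m - 1) * ∏ k ∈ Finset.univ.erase j, (t - x k) ^ m) := by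
  apply Continuous.mul
  · fun_prop
  · exact continuous_finset_prod _ (fun l _ => by fun_prop)

lemma Fint_sum_zero (n m : ℕ) (hm : 1 ≤ m) (p q : Fin n) (x : Fin n → ℝ) :
    ∑ j, Fint n m p q j x = 0 := by
  have hD : ∀ t : ℝ, HasDerivAt (fun t : ℝ => ∏ k, (t - x k) ^ m)
      (∑ j, (m : ℝ) * ((t - x j) ^ (m - 1) * ∏ k ∈ Finset.univ.erase j, (t - x k) ^ m)) t := by
    intro t
    have h := HasDerivAt.fun_finsetProd (u := Finset.univ)
      (f := fun k (t : ℝ) => (t - x k) ^ m)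
      (f' := fun k => (m : ℝ) * (t - x k) ^ (m - 1)) (x := t) ?_
    · refine h.congr_deriv ?_
      refine Finset.sum_congr rfl (fun j _ => ?_)
      rw [smul_eq_mul]; ring
    · intro k _
      simpa using ((hasDerivAt_id t).sub_const (x k)).fun_pow m
  have hcont : Continuous (fun t : ℝ =>
      (∑ j, (m : ℝ) * ((t - x j) ^ (m - 1) * ∏ k ∈ Finset.univ.erase j, (t - x k) ^ m))) := by
    apply continuous_finset_sum
    intro j _
    exact (continuous_const.mul (cont_integrand x j))
  have h0 : (∫ t in x p..x q,
        ∑ j, (m : ℝ) * ((t - x j) ^ (m - 1) * ∏ k ∈ Finset.univ.erase j, (t - x k) ^ m))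
      = (∏ k, (x q - x k) ^ m) - ∏ k, (x p - x k) ^ m :=
    intervalIntegral.integral_eq_sub_of_hasDerivAt (fun t _ => hD t)
      (hcont.intervalIntegrable _ _)
  have hq : (∏ k, (x q - x k) ^ m) = 0 :=
    Finset.prod_eq_zero (Finset.mem_univ q) (by simp [zero_pow (by omega : m ≠ 0)])
  have hp : (∏ k, (x p - x k) ^ m) = 0 :=
    Finset.prod_eq_zero (Finset.mem_univ p) (by simp [zero_pow (by omega : m ≠ 0)])
  rw [intervalIntegral.integral_finset_sum] at h0
  · simp only [intervalIntegral.integral_const_mul] at h0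
    rw [← Finset.mul_sum, hq, hp, sub_zero] at h0
    have hm0 : (m : ℝ) ≠ 0 := by exact_mod_cast (by omega : m ≠ 0)
    have := mul_eq_zero.mp h0
    simp only [Fint]
    tauto
  · intro j _
    exact ((continuous_const.mul (cont_integrand x j)).intervalIntegrable _ _)

lemma prod_expand {n : ℕ} (e : Fin n → ℕ) (y : Fin n → ℝ) (t : ℝ) :
    ∏ l, (t - y l) ^ (e l) = ∑ γ ∈ Fintype.piFinset (fun l => Finset.range (e l + 1)),
      (∏ l, ((-(y l)) ^ (e l - γ l) * ((e l).choose (γ l) : ℝ))) * t ^ (∑ l, γ l) := by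
  have h1 : ∀ l, (t - y l) ^ (e l) = ∑ k ∈ Finset.range (e l + 1),
      t ^ k * ((-(y l)) ^ (e l - k) * ((e l).choose k : ℝ)) := by
    intro l; rw [sub_eq_add_neg, add_pow]
    exact Finset.sum_congr rfl fun k _ => by ring
  simp_rw [h1]
  rw [Finset.prod_univ_sum]
  refine Finset.sum_congr rfl fun γ _ => ?_
  rw [Finset.prod_mul_distrib, Finset.prod_mul_distrib, Finset.prod_pow_eq_pow_sum]
  ring

lemma integrand_eq_full {n m : ℕ} (i : Fin n) (y : Fin n → ℝ) (t : ℝ) :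
    (t - y i) ^ (m - 1) * ∏ k ∈ Finset.univ.erase i, (t - y k) ^ m
      = ∏ l, (t - y l) ^ (if l = i then m - 1 else m) := by
  rw [← Finset.mul_prod_erase Finset.univ _ (Finset.mem_univ i), if_pos rfl]
  congr 1
  exact Finset.prod_congr rfl fun l hl => by rw [if_neg (Finset.ne_of_mem_erase hl)]

lemma Fint_eq_sum (n m : ℕ) (p q i : Fin n) (y : Fin n → ℝ) :
    Fint n m p q i y = ∑ γ ∈ Fintype.piFinset
        (fun l : Fin n => Finset.range ((if l = i then m - 1 else m) + 1)),
      (∏ l, ((-(y l)) ^ ((if l = i then m - 1 else m) - γ l)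
          * (((if l = i then m - 1 else m) : ℕ).choose (γ l) : ℝ)))
        * ((y q ^ ((∑ l, γ l) + 1) - y p ^ ((∑ l, γ l) + 1)) / ((∑ l, γ l) + 1)) := by
  unfold Fint
  rw [intervalIntegral.integral_congr (g := fun t => ∑ γ ∈ Fintype.piFinset
        (fun l : Fin n => Finset.range ((if l = i then m - 1 else m) + 1)),
      (∏ l, ((-(y l)) ^ ((if l = i then m - 1 else m) - γ l)
          * (((if l = i then m - 1 else m) : ℕ).choose (γ l) : ℝ))) * t ^ (∑ l, γ l))
      (fun t _ => by rw [integrand_eq_full, prod_expand])]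
  rw [intervalIntegral.integral_finset_sum (fun γ _ =>
    ((continuous_const.fun_mul (continuous_pow _)).intervalIntegrable _ _))]
  refine Finset.sum_congr rfl fun γ _ => ?_
  rw [intervalIntegral.integral_const_mul, integral_pow]

lemma diff_finset_prod {E : Type*} [NormedAddCommGroup E] [NormedSpace ℝ E] {ι : Type*}
    (s : Finset ι) (f : ι → E → ℝ) (hf : ∀ l ∈ s, Differentiable ℝ (f l)) :
    Differentiable ℝ (fun y => ∏ l ∈ s, f l y) := by
  classical
  induction s using Finset.induction_on with
  | empty => simpa using differentiable_const (1:ℝ)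
  | insert _ _ hns ih =>
    rename_i a s'
    simp only [Finset.prod_insert hns]
    exact (hf a (Finset.mem_insert_self a s')).mul
      (ih fun l hl => hf l (Finset.mem_insert_of_mem hl))

lemma Fint_differentiable (n m : ℕ) (p q i : Fin n) :
    Differentiable ℝ (Fint n m p q i) := by
  have hrw : Fint n m p q i = fun y => ∑ γ ∈ Fintype.piFinset
        (fun l : Fin n => Finset.range ((if l = i then m - 1 else m) + 1)),
      (∏ l, ((-(y l)) ^ ((if l = i then m - 1 else m) - γ l)
          * (((if l = i then m - 1 else m) : ℕ).choose (γ l) : ℝ)))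
        * ((y q ^ ((∑ l, γ l) + 1) - y p ^ ((∑ l, γ l) + 1)) / ((∑ l, γ l) + 1)) :=
    funext (Fint_eq_sum n m p q i)
  rw [hrw]
  have hproj : ∀ l : Fin n, Differentiable ℝ (fun y : Fin n → ℝ => y l) := fun l =>
    (ContinuousLinearMap.proj l : (Fin n → ℝ) →L[ℝ] ℝ).differentiable
  apply Differentiable.fun_sum
  intro γ _
  have h1 : Differentiable ℝ (fun y : Fin n → ℝ =>
      ∏ l, ((-(y l)) ^ ((if l = i then m - 1 else m) - γ l)
          * (((if l = i then m - 1 else m) : ℕ).choose (γ l) : ℝ))) :=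
    diff_finset_prod Finset.univ _ (fun l _ => ((hproj l).neg.pow _).mul_const _)
  have h2 : Differentiable ℝ (fun y : Fin n → ℝ =>
      ((y q ^ ((∑ l, γ l) + 1) - y p ^ ((∑ l, γ l) + 1)) / ((∑ l, γ l) + 1) : ℝ)) :=
    by fun_prop
  exact h1.mul h2

/-- the fixed part of the integrand -/
def haux (n m : ℕ) (i j : Fin n) (x : Fin n → ℝ) (t : ℝ) : ℝ :=
  (t - x i) ^ (m - 1) * ∏ l ∈ (Finset.univ.erase i).erase j, (t - x l) ^ m

def Gaux (h : ℝ → ℝ) (r : ℕ) (w : ℝ) : ℝ := ∫ t in (0:ℝ)..w, t ^ r * h t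

lemma haux_cont (n m : ℕ) (i j : Fin n) (x : Fin n → ℝ) : Continuous (haux n m i j x) := by
  unfold haux
  exact (by fun_prop : Continuous fun t : ℝ => (t - x i) ^ (m-1)).mul
    (continuous_finset_prod _ fun l _ => by fun_prop)

lemma Gaux_hasDerivAt {h : ℝ → ℝ} (hc : Continuous h) (r : ℕ) (w : ℝ) :
    HasDerivAt (Gaux h r) (w ^ r * h w) w := by
  have hcr : Continuous fun t : ℝ => t ^ r * h t := (continuous_pow r).mul hc
  exact intervalIntegral.integral_hasDerivAt_right (hcr.intervalIntegrable _ _)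
    (hcr.stronglyMeasurableAtFilter _ _) hcr.continuousAt

lemma Gaux_sub {h : ℝ → ℝ} (hc : Continuous h) (r : ℕ) (a b : ℝ) :
    Gaux h r b - Gaux h r a = ∫ t in a..b, t ^ r * h t := by
  have hcr : Continuous fun t : ℝ => t ^ r * h t := (continuous_pow r).mul hc
  exact integral_interval_sub_left (hcr.intervalIntegrable _ _) (hcr.intervalIntegrable _ _)

section main
variable {n m : ℕ} {p q i j : Fin n} {x : Fin n → ℝ}

lemma step1 (hm : 1 ≤ m) (hij : i ≠ j) (s : ℝ) :
    Fint n m p q i (x + s • (Pi.single j 1 : Fin n → ℝ)) =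
      ∑ r ∈ Finset.range (m + 1), ((-(x j + s)) ^ (m - r) * (m.choose r : ℝ)) *
        (Gaux (haux n m i j x) r (x q + s * (if j = q then (1:ℝ) else 0))
          - Gaux (haux n m i j x) r (x p + s * (if j = p then (1:ℝ) else 0))) := by
  classical
  set y := x + s • (Pi.single j 1 : Fin n → ℝ) with hy
  have hyl : ∀ l : Fin n, l ≠ j → y l = x l := by
    intro l hl
    simp [hy, Pi.single_eq_of_ne hl]
  have hyj : y j = x j + s := by simp [hy]
  have hyend : ∀ c : Fin n, y c = x c + s * (if j = c then (1:ℝ) else 0) := by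
    intro c
    by_cases hjc : j = c
    · subst hjc; simp [hyj]
    · rw [hyl c (fun hc => hjc hc.symm)]; simp [hjc]
  have hji : j ∈ Finset.univ.erase i := Finset.mem_erase.mpr ⟨Ne.symm hij, Finset.mem_univ j⟩
  have hintegrand : ∀ t : ℝ,
      (t - y i) ^ (m - 1) * ∏ k ∈ Finset.univ.erase i, (t - y k) ^ m
        = ∑ r ∈ Finset.range (m + 1),
            ((-(x j + s)) ^ (m - r) * (m.choose r : ℝ)) * (t ^ r * haux n m i j x t) := by
    intro t
    rw [hyl i hij, ← Finset.mul_prod_erase _ _ hji, hyj]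
    have hP : ∏ k ∈ (Finset.univ.erase i).erase j, (t - y k) ^ m
        = ∏ k ∈ (Finset.univ.erase i).erase j, (t - x k) ^ m :=
      Finset.prod_congr rfl fun k hk => by rw [hyl k (Finset.ne_of_mem_erase hk)]
    rw [hP]
    have hexp : (t - (x j + s)) ^ m
        = ∑ r ∈ Finset.range (m + 1), t ^ r * (-(x j + s)) ^ (m - r) * (m.choose r : ℝ) := by
      rw [sub_eq_add_neg, add_pow]
    rw [hexp, Finset.sum_mul, Finset.mul_sum]
    refine Finset.sum_congr rfl fun r _ => ?_
    unfold haux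
    ring
  have hcr : ∀ r : ℕ, Continuous fun t : ℝ => t ^ r * haux n m i j x t :=
    fun r => (continuous_pow r).mul (haux_cont n m i j x)
  unfold Fint
  rw [intervalIntegral.integral_congr (fun t _ => hintegrand t)]
  rw [intervalIntegral.integral_finset_sum (fun r _ =>
    (((continuous_const.fun_mul (hcr r))).intervalIntegrable _ _))]
  refine Finset.sum_congr rfl fun r _ => ?_
  rw [intervalIntegral.integral_const_mul, Gaux_sub (haux_cont n m i j x), hyend p, hyend q]


lemma step2 (hij : i ≠ j) :
    HasDerivAt (fun s : ℝ =>
      ∑ r ∈ Finset.range (m + 1), ((-(x j + s)) ^ (m - r) * (m.choose r : ℝ)) *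
        (Gaux (haux n m i j x) r (x q + s * (if j = q then (1:ℝ) else 0))
          - Gaux (haux n m i j x) r (x p + s * (if j = p then (1:ℝ) else 0))))
      (∑ r ∈ Finset.range (m + 1),
        ((((m - r : ℕ) : ℝ) * (-(x j)) ^ (m - r - 1) * -1 * (m.choose r : ℝ)) *
            (Gaux (haux n m i j x) r (x q) - Gaux (haux n m i j x) r (x p))
          + ((-(x j)) ^ (m - r) * (m.choose r : ℝ)) *
            ((x q) ^ r * haux n m i j x (x q) * (if j = q then (1:ℝ) else 0)
              - (x p) ^ r * haux n m i j x (x p) * (if j = p then (1:ℝ) else 0)))) 0 := by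
  apply HasDerivAt.fun_sum
  intro r _
  have h1 : HasDerivAt (fun s : ℝ => -(x j + s)) (-1) 0 := by
    simpa using ((hasDerivAt_id (0:ℝ)).const_add (x j)).fun_neg
  have hA : HasDerivAt (fun s : ℝ => (-(x j + s)) ^ (m - r) * (m.choose r : ℝ))
      (((m - r : ℕ) : ℝ) * (-(x j)) ^ (m - r - 1) * -1 * (m.choose r : ℝ)) 0 := by
    have := (h1.fun_pow (m - r)).mul_const (m.choose r : ℝ)
    simpa using this
  have hline : ∀ c : Fin n, HasDerivAt (fun s : ℝ => x c + s * (if j = c then (1:ℝ) else 0))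
      (if j = c then (1:ℝ) else 0) 0 :=
    fun c => (hasDerivAt_mul_const _).const_add (x c)
  have hBc : ∀ c : Fin n, HasDerivAt
      (fun s : ℝ => Gaux (haux n m i j x) r (x c + s * (if j = c then (1:ℝ) else 0)))
      ((x c) ^ r * haux n m i j x (x c) * (if j = c then (1:ℝ) else 0)) 0 := by
    intro c
    have hg : HasDerivAt (Gaux (haux n m i j x) r) ((x c) ^ r * haux n m i j x (x c))
        ((fun s : ℝ => x c + s * (if j = c then (1:ℝ) else 0)) 0) := by
      simpa using Gaux_hasDerivAt (haux_cont n m i j x) r (x c)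
    exact hg.comp 0 (hline c)
  have := hA.fun_mul ((hBc q).fun_sub (hBc p))
  simpa using this

lemma collapse (w : ℝ) :
    ∑ r ∈ Finset.range (m + 1), ((-(x j)) ^ (m - r) * (m.choose r : ℝ)) * w ^ r
      = (w - x j) ^ m := by
  rw [sub_eq_add_neg, add_pow]
  exact Finset.sum_congr rfl fun r _ => by ring

lemma hT2 (hm : 1 ≤ m) :
    ∑ r ∈ Finset.range (m + 1), ((-(x j)) ^ (m - r) * (m.choose r : ℝ)) *
        ((x q) ^ r * haux n m i j x (x q) * (if j = q then (1:ℝ) else 0)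
          - (x p) ^ r * haux n m i j x (x p) * (if j = p then (1:ℝ) else 0)) = 0 := by
  have key : ∀ c : Fin n,
      ∑ r ∈ Finset.range (m + 1), ((-(x j)) ^ (m - r) * (m.choose r : ℝ)) *
        ((x c) ^ r * haux n m i j x (x c) * (if j = c then (1:ℝ) else 0)) = 0 := by
    intro c
    have : ∑ r ∈ Finset.range (m + 1), ((-(x j)) ^ (m - r) * (m.choose r : ℝ)) *
        ((x c) ^ r * haux n m i j x (x c) * (if j = c then (1:ℝ) else 0))
        = ((x c - x j) ^ m) * (haux n m i j x (x c) * (if j = c then (1:ℝ) else 0)) := by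
      rw [← collapse (x c), Finset.sum_mul]
      exact Finset.sum_congr rfl fun r _ => by ring
    rw [this]
    by_cases hjc : j = c
    · subst hjc; simp [sub_self, zero_pow (by omega : m ≠ 0)]
    · simp [hjc]
  simp_rw [mul_sub, Finset.sum_sub_distrib, key q, key p, sub_zero]

lemma pointwise_deriv_sum (t : ℝ) :
    ∑ r ∈ Finset.range (m + 1),
        (((m - r : ℕ) : ℝ) * (-(x j)) ^ (m - r - 1) * -1 * (m.choose r : ℝ)) * t ^ r
      = -(m : ℝ) * (t - x j) ^ (m - 1) := by
  have h1 : HasDerivAt (fun u : ℝ => -u) (-1) (x j) := hasDerivAt_neg' (x j)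
  have hB : HasDerivAt (fun u : ℝ => ∑ r ∈ Finset.range (m + 1),
        t ^ r * (-u) ^ (m - r) * (m.choose r : ℝ))
      (∑ r ∈ Finset.range (m + 1),
        t ^ r * (((m - r : ℕ) : ℝ) * (-(x j)) ^ (m - r - 1) * -1) * (m.choose r : ℝ)) (x j) :=
    HasDerivAt.fun_sum fun r _ => ((h1.fun_pow (m - r)).const_mul (t ^ r)).mul_const _
  have hA : HasDerivAt (fun u : ℝ => (t - u) ^ m) ((m : ℝ) * (t - x j) ^ (m - 1) * -1) (x j) := by
    have := ((hasDerivAt_id (x j)).const_sub t).fun_pow m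
    simpa using this
  have funeq : (fun u : ℝ => (t - u) ^ m) = fun u : ℝ => ∑ r ∈ Finset.range (m + 1),
      t ^ r * (-u) ^ (m - r) * (m.choose r : ℝ) :=
    funext fun u => by rw [sub_eq_add_neg, add_pow]
  rw [funeq] at hA
  have huniq := hB.unique hA
  calc ∑ r ∈ Finset.range (m + 1),
        (((m - r : ℕ) : ℝ) * (-(x j)) ^ (m - r - 1) * -1 * (m.choose r : ℝ)) * t ^ r
      = ∑ r ∈ Finset.range (m + 1),
        t ^ r * (((m - r : ℕ) : ℝ) * (-(x j)) ^ (m - r - 1) * -1) * (m.choose r : ℝ) :=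
        Finset.sum_congr rfl fun r _ => by ring
    _ = (m : ℝ) * (t - x j) ^ (m - 1) * -1 := huniq
    _ = -(m : ℝ) * (t - x j) ^ (m - 1) := by ring

lemma hT1 :
    ∑ r ∈ Finset.range (m + 1),
        ((((m - r : ℕ) : ℝ) * (-(x j)) ^ (m - r - 1) * -1 * (m.choose r : ℝ)) *
          (Gaux (haux n m i j x) r (x q) - Gaux (haux n m i j x) r (x p)))
      = ∫ t in x p..x q, -(m : ℝ) * ((t - x j) ^ (m - 1) * haux n m i j x t) := by
  have hcr : ∀ r : ℕ, Continuous fun t : ℝ => t ^ r * haux n m i j x t :=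
    fun r => (continuous_pow r).mul (haux_cont n m i j x)
  simp_rw [Gaux_sub (haux_cont n m i j x)]
  simp_rw [← intervalIntegral.integral_const_mul]
  rw [← intervalIntegral.integral_finset_sum (fun r _ =>
    ((continuous_const.fun_mul (hcr r)).intervalIntegrable _ _))]
  apply intervalIntegral.integral_congr
  intro t _
  have := pointwise_deriv_sum (m := m) (j := j) (x := x) t
  calc ∑ r ∈ Finset.range (m + 1),
        ((((m - r : ℕ) : ℝ) * (-(x j)) ^ (m - r - 1) * -1 * (m.choose r : ℝ)) *
          (t ^ r * haux n m i j x t))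
      = (∑ r ∈ Finset.range (m + 1),
        (((m - r : ℕ) : ℝ) * (-(x j)) ^ (m - r - 1) * -1 * (m.choose r : ℝ)) * t ^ r)
          * haux n m i j x t := by
        rw [Finset.sum_mul]; exact Finset.sum_congr rfl fun r _ => by ring
    _ = -(m : ℝ) * ((t - x j) ^ (m - 1) * haux n m i j x t) := by rw [this]; ring


lemma cont_integrand2 (x : Fin n → ℝ) (c : Fin n) :
    Continuous (fun t : ℝ => (t - x c) ^ (m - 1) * ∏ k ∈ Finset.univ.erase c, (t - x k) ^ m) := by
  apply Continuous.mul
  · fun_prop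
  · exact continuous_finset_prod _ (fun l _ => by fun_prop)

lemma diff_identity (hm : 1 ≤ m) (hij : i ≠ j) :
    Fint n m p q i x - Fint n m p q j x
      = (x i - x j) * ∫ t in x p..x q, (t - x j) ^ (m - 1) * haux n m i j x t := by
  unfold Fint
  rw [← intervalIntegral.integral_sub ((cont_integrand2 x i).intervalIntegrable _ _)
    ((cont_integrand2 x j).intervalIntegrable _ _), ← intervalIntegral.integral_const_mul]
  apply intervalIntegral.integral_congr
  intro t _
  have hji : j ∈ Finset.univ.erase i := Finset.mem_erase.mpr ⟨Ne.symm hij, Finset.mem_univ j⟩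
  have hijm : i ∈ Finset.univ.erase j := Finset.mem_erase.mpr ⟨hij, Finset.mem_univ i⟩
  have hpow : ∀ a : ℝ, a ^ m = a ^ (m - 1) * a := by
    intro a
    conv_lhs => rw [show m = (m - 1) + 1 by omega]
    rw [pow_succ]
  simp only
  rw [← Finset.mul_prod_erase _ _ hji, ← Finset.mul_prod_erase _ _ hijm,
    Finset.erase_right_comm (a := j) (b := i)]
  unfold haux
  rw [hpow (t - x j), hpow (t - x i)]
  ring

end main

section assemble
variable {n m : ℕ} {p q i j : Fin n} {x : Fin n → ℝ}

lemma Fint_fderiv (hm : 1 ≤ m) (hx : ∀ i j : Fin n, i ≠ j → x i ≠ x j) (hij : i ≠ j) :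
    fderiv ℝ (Fint n m p q i) x (Pi.single j 1)
      = -(m : ℝ) * (Fint n m p q i x - Fint n m p q j x) / (x i - x j) := by
  have hline : HasDerivAt (fun s : ℝ => x + s • (Pi.single j 1 : Fin n → ℝ))
      (Pi.single j 1 : Fin n → ℝ) 0 := by
    simpa using (((hasDerivAt_id (0:ℝ)).smul_const (Pi.single j 1 : Fin n → ℝ)).const_add x)
  have hcomp : HasDerivAt (fun s : ℝ => Fint n m p q i (x + s • (Pi.single j 1 : Fin n → ℝ)))
      (fderiv ℝ (Fint n m p q i) x (Pi.single j 1)) 0 := by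
    have hF : HasFDerivAt (Fint n m p q i) (fderiv ℝ (Fint n m p q i) x)
        ((fun s : ℝ => x + s • (Pi.single j 1 : Fin n → ℝ)) 0) := by
      simpa using (Fint_differentiable n m p q i x).hasFDerivAt
    exact hF.comp_hasDerivAt 0 hline
  have hphi : HasDerivAt (fun s : ℝ => Fint n m p q i (x + s • (Pi.single j 1 : Fin n → ℝ)))
      (∑ r ∈ Finset.range (m + 1),
        ((((m - r : ℕ) : ℝ) * (-(x j)) ^ (m - r - 1) * -1 * (m.choose r : ℝ)) *
            (Gaux (haux n m i j x) r (x q) - Gaux (haux n m i j x) r (x p))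
          + ((-(x j)) ^ (m - r) * (m.choose r : ℝ)) *
            ((x q) ^ r * haux n m i j x (x q) * (if j = q then (1:ℝ) else 0)
              - (x p) ^ r * haux n m i j x (x p) * (if j = p then (1:ℝ) else 0)))) 0 := by
    have heq : (fun s : ℝ => Fint n m p q i (x + s • (Pi.single j 1 : Fin n → ℝ)))
        = fun s : ℝ => ∑ r ∈ Finset.range (m + 1),
            ((-(x j + s)) ^ (m - r) * (m.choose r : ℝ)) *
              (Gaux (haux n m i j x) r (x q + s * (if j = q then (1:ℝ) else 0))
                - Gaux (haux n m i j x) r (x p + s * (if j = p then (1:ℝ) else 0))) :=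
      funext (step1 hm hij)
    rw [heq]
    exact step2 hij
  have hD := hcomp.unique hphi
  rw [hD, Finset.sum_add_distrib, hT2 hm, add_zero, hT1,
    intervalIntegral.integral_const_mul, diff_identity hm hij]
  have hne : x i - x j ≠ 0 := sub_ne_zero.mpr (hx i j hij)
  field_simp

end assemble

/-- On the set of points with pairwise distinct coordinates:
(a) `Σ_j F_j = 0`; (b) each `F_i` is differentiable and
`∂F_i/∂x_j = -m (F_i - F_j)/(x_i - x_j)` for `i ≠ j`. -/
theorem Fint_sum_eq_zero_and_deriv
    (n : ℕ) (hn : 2 ≤ n) (m : ℕ) (hm : 1 ≤ m)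
    (p q : Fin n) (hpq : p ≠ q) :
    ∀ x : Fin n → ℝ, (∀ i j : Fin n, i ≠ j → x i ≠ x j) →
      (∑ j, Fint n m p q j x) = 0 ∧
      ∀ i : Fin n, DifferentiableAt ℝ (Fint n m p q i) x ∧
        ∀ j : Fin n, i ≠ j →
          fderiv ℝ (Fint n m p q i) x (Pi.single j 1)
            = -(m : ℝ) * (Fint n m p q i x - Fint n m p q j x) / (x i - x j) := by
  intro x hx
  refine ⟨Fint_sum_zero n m hm p q x, fun i => ⟨Fint_differentiable n m p q i x, fun j hij => ?_⟩⟩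
  exact Fint_fderiv hm hx hij
end
end
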